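/- Let Ω ⊂ ℝ² be convex and bounded with δ := diam Ω, let f ∈ C^∞(Ω̄), and let R > 0. Then, with Ω_z := Ω − z and B_R ⊂ ℝ² the ball of radius R centered at the origin, ∫_{B_R^c} ∫_{Ω ∩ Ω_z} |f(x+z) − f(x)|² / |z|³ dx dz ≤ (4π/R) ‖f‖_∞ min{ δ ∫_Ω |∇f| dx, 2|Ω| ‖f‖_∞ }, where ‖f‖_∞ := sup_Ω |f|. -/

import Mathlib

open MeasureTheory Real Set Filter Bornology

noncomputable section

abbrev R2 := EuclideanSpace ℝ (Fin 2)


lemma R2_volume_ball_one : (volume (Metric.ball (0:R2) 1)).toReal = π := by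
  rw [EuclideanSpace.volume_ball]
  norm_num [Real.sq_sqrt Real.pi_pos.le, Real.Gamma_two, Real.pi_nonneg]

lemma radial_integral_eq (ρ : ℝ → ℝ) :
    ∫ z : R2, ρ ‖z‖ = 2 * π * ∫ y in Ioi (0:ℝ), y * ρ y := by
  have h := MeasureTheory.integral_fun_norm_addHaar (volume : Measure R2) ρ
  have hdim : Module.finrank ℝ R2 = 2 := by
    simp [finrank_euclideanSpace]
  rw [hdim] at h
  simpa [measureReal_def, ENNReal.toReal_ofReal Real.pi_nonneg, R2_volume_ball_one, smul_eq_mul, mul_assoc, mul_comm, mul_left_comm] using h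

lemma annulus_setup (c R δ : ℝ) (k : ℕ) (hc : 0 ≤ c) (hR : 0 < R) (hRδ : R ≤ δ) :
    Integrable (fun z : R2 => Set.indicator {y : R2 | ‖y‖ ∈ Icc R δ} (fun z => c / ‖z‖ ^ k) z)
    ∧ ∫ z : R2, Set.indicator {y : R2 | ‖y‖ ∈ Icc R δ} (fun z => c / ‖z‖ ^ k) z
      = 2 * π * ∫ y in R..δ, y * (c / y ^ k) := by
  have hA : MeasurableSet {y : R2 | ‖y‖ ∈ Icc R δ} :=
    measurable_norm measurableSet_Icc
  constructor
  · rw [integrable_indicator_iff hA]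
    apply Measure.integrableOn_of_bounded (M := c / R ^ k)
    · refine ne_top_of_le_ne_top (IsCompact.measure_lt_top (K := Metric.closedBall (0:R2) δ)
        (isCompact_closedBall _ _)).ne (measure_mono ?_)
      intro y hy
      exact Metric.mem_closedBall.2 (by simpa [dist_eq_norm] using hy.2)
    · exact (measurable_const.div (measurable_norm.pow_const k)).aestronglyMeasurable
    · filter_upwards [ae_restrict_mem hA] with y hy
      rw [Real.norm_eq_abs, abs_of_nonneg (by positivity)]
      have h1 : R ^ k ≤ ‖y‖ ^ k := pow_le_pow_left₀ hR.le hy.1 k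
      exact div_le_div_of_nonneg_left hc (pow_pos hR k) h1 |>.trans_eq rfl
  · have hpt : ∀ z : R2, Set.indicator {y : R2 | ‖y‖ ∈ Icc R δ} (fun z => c / ‖z‖ ^ k) z
        = Set.indicator (Icc R δ) (fun r => c / r ^ k) ‖z‖ := by
      intro z
      rfl
    rw [integral_congr_ae (Filter.Eventually.of_forall hpt),
      radial_integral_eq (Set.indicator (Icc R δ) (fun r => c / r ^ k))]
    congr 1
    have hpt2 : ∀ y : ℝ, y * Set.indicator (Icc R δ) (fun r => c / r ^ k) y
        = Set.indicator (Icc R δ) (fun r => r * (c / r ^ k)) y := by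
      intro y
      by_cases h : y ∈ Icc R δ <;> simp [h]
    rw [integral_congr_ae (Filter.Eventually.of_forall fun y => hpt2 y)]
    have hss : Icc R δ ∩ Ioi 0 = Icc R δ :=
      inter_eq_left.mpr (fun y hy => hR.trans_le hy.1)
    rw [integral_indicator measurableSet_Icc, Measure.restrict_restrict measurableSet_Icc, hss,
      integral_Icc_eq_integral_Ioc, ← intervalIntegral.integral_of_le hRδ]

lemma annulus_int_three (c R δ : ℝ) (hR : 0 < R) (hRδ : R ≤ δ) :
    ∫ y in R..δ, y * (c / y ^ 3) = c * (R⁻¹ - δ⁻¹) := by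
  have h0 : (0:ℝ) ∉ Set.uIcc R δ := by
    rw [Set.uIcc_of_le hRδ]
    exact fun h => absurd h.1 (not_le.2 hR)
  have hcong : ∀ y ∈ Set.uIcc R δ, y * (c / y ^ 3) = c * y ^ (-2:ℤ) := by
    intro y hy
    rw [Set.uIcc_of_le hRδ] at hy
    have hy0 : (0:ℝ) < y := hR.trans_le hy.1
    have h2 : (y:ℝ) ^ (-2:ℤ) = (y ^ (2:ℕ))⁻¹ := by
      rw [zpow_neg]; norm_cast
    rw [h2]
    field_simp
  rw [intervalIntegral.integral_congr hcong, intervalIntegral.integral_const_mul,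
    integral_zpow (Or.inr ⟨by norm_num, h0⟩)]
  have e1 : (-2 + 1 : ℤ) = -1 := by norm_num
  rw [e1]
  simp only [zpow_neg_one]
  push_cast
  ring

lemma annulus_int_two (c R δ : ℝ) (hR : 0 < R) (hRδ : R ≤ δ) :
    ∫ y in R..δ, y * (c / y ^ 2) = c * Real.log (δ / R) := by
  have h0 : (0:ℝ) ∉ Set.uIcc R δ := by
    rw [Set.uIcc_of_le hRδ]
    exact fun h => absurd h.1 (not_le.2 hR)
  have hcong : ∀ y ∈ Set.uIcc R δ, y * (c / y ^ 2) = c * (1 / y) := by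
    intro y hy
    rw [Set.uIcc_of_le hRδ] at hy
    have hy0 : (0:ℝ) < y := hR.trans_le hy.1
    field_simp
  rw [intervalIntegral.integral_congr hcong, intervalIntegral.integral_const_mul,
    integral_one_div h0]

set_option maxHeartbeats 1000000

/-- **Large-translation estimate.** For `Ω ⊆ ℝ²` convex and bounded with `δ = diam Ω`,
`f ∈ C^∞(Ω̄)` and `R > 0`, with `Ω_z = Ω - z` (so `Ω ∩ Ω_z = {x ∈ Ω : x + z ∈ Ω}`):
`∫_{B_Rᶜ} ∫_{Ω ∩ Ω_z} |f(x+z)-f(x)|²/|z|³ dx dz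
  ≤ (4π/R) ‖f‖_∞ min{δ ∫_Ω |∇f|, 2|Ω| ‖f‖_∞}`. -/
theorem large_translation_estimate (Ω : Set R2) (hconv : Convex ℝ Ω) (hbd : IsBounded Ω)
    (f : R2 → ℝ) (hf : ContDiffOn ℝ (⊤ : ℕ∞) f (closure Ω)) (R : ℝ) (hR : 0 < R) :
    (∫ z in (Metric.ball (0:R2) R)ᶜ,
        ∫ x in {x ∈ Ω | x + z ∈ Ω}, (f (x + z) - f x) ^ 2 / ‖z‖ ^ 3) ≤
      4 * π / R * sSup ((fun x => |f x|) '' Ω) *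
        min (Metric.diam Ω * ∫ x in Ω, ‖gradient f x‖)
          (2 * (volume Ω).toReal * sSup ((fun x => |f x|) '' Ω)) := by
  classical
  set δ := Metric.diam Ω with hδdef
  set M := sSup ((fun x => |f x|) '' Ω) with hMdef
  set I := ∫ x in Ω, ‖gradient f x‖ with hIdef
  set V := (volume Ω).toReal with hVdef
  have hM0 : 0 ≤ M := Real.sSup_nonneg (by rintro y ⟨x, -, rfl⟩; exact abs_nonneg _)
  have hI0 : 0 ≤ I := integral_nonneg fun x => norm_nonneg _
  have hV0 : 0 ≤ V := ENNReal.toReal_nonneg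
  have hδ0 : 0 ≤ δ := Metric.diam_nonneg
  have hπ : (0:ℝ) ≤ π := Real.pi_nonneg
  have hRHS0 : 0 ≤ 4 * π / R * M * min (δ * I) (2 * V * M) := by
    apply mul_nonneg (mul_nonneg (by positivity) hM0)
    exact le_min (mul_nonneg hδ0 hI0) (by positivity)
  -- nonnegativity of the inner integral
  have hφ0 : ∀ z : R2, 0 ≤ ∫ x in {x ∈ Ω | x + z ∈ Ω}, (f (x + z) - f x) ^ 2 / ‖z‖ ^ 3 :=
    fun z => integral_nonneg fun x => div_nonneg (sq_nonneg _) (by positivity)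
  -- the set {x ∈ Ω | x + z ∈ Ω} is empty for large z
  have hS_empty : ∀ z : R2, δ < ‖z‖ → {x ∈ Ω | x + z ∈ Ω} = ∅ := by
    intro z hz
    rw [Set.eq_empty_iff_forall_notMem]
    rintro x ⟨hx1, hx2⟩
    have h1 : dist x (x + z) ≤ δ := Metric.dist_le_diam_of_mem hbd hx1 hx2
    rw [dist_eq_norm] at h1
    rw [show x - (x + z) = -z by abel] at h1
    rw [norm_neg] at h1
    exact absurd h1 (not_le.2 hz)
  -- trivial case : δ < R
  rcases lt_or_ge δ R with hδR | hRδ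
  · have : ∀ z ∈ (Metric.ball (0:R2) R)ᶜ,
        (∫ x in {x ∈ Ω | x + z ∈ Ω}, (f (x + z) - f x) ^ 2 / ‖z‖ ^ 3) = 0 := by
      intro z hz
      have hzR : R ≤ ‖z‖ := by
        simpa [Metric.mem_ball, dist_zero_right] using hz
      rw [hS_empty z (hδR.trans_le hzR)]
      simp
    rw [setIntegral_eq_zero_of_forall_eq_zero this]
    exact hRHS0
  -- trivial case : empty interior
  rcases eq_empty_or_nonempty (interior Ω) with hint | hne
  · have hΩ0 : volume Ω = 0 := by
      have h1 : Ω ⊆ frontier Ω := by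
        rw [frontier, hint]
        exact fun x hx => ⟨subset_closure hx, Set.notMem_empty x⟩
      exact measure_mono_null h1 (hconv.addHaar_frontier volume)
    have : ∀ z : R2,
        (∫ x in {x ∈ Ω | x + z ∈ Ω}, (f (x + z) - f x) ^ 2 / ‖z‖ ^ 3) = 0 := by
      intro z
      have h1 : volume {x ∈ Ω | x + z ∈ Ω} = 0 :=
        measure_mono_null (fun x hx => hx.1) hΩ0
      rw [Measure.restrict_eq_zero.mpr h1]
      exact integral_zero_measure _
    simp only [this]
    rw [integral_zero]
    exact hRHS0
  -- main case
  have hIntCl : interior Ω ⊆ closure Ω := interior_subset.trans subset_closure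
  have hK : IsCompact (closure Ω) := hbd.isCompact_closure
  have hKfin : volume (closure Ω) < ⊤ := hK.measure_lt_top
  have hVfin : volume Ω ≠ ⊤ := ne_top_of_le_ne_top hKfin.ne (measure_mono subset_closure)
  have hfc : ContinuousOn f (closure Ω) := hf.continuousOn
  -- the L^∞ bound
  have hMb : ∀ x ∈ Ω, |f x| ≤ M := by
    intro x hx
    apply le_csSup _ (Set.mem_image_of_mem _ hx)
    have h1 : BddAbove ((fun x => |f x|) '' closure Ω) :=
      (hK.image_of_continuousOn hfc.abs).bddAbove
    exact h1.mono (Set.image_mono subset_closure)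
  -- the frontier is null
  have hfr : volume (Ω \ interior Ω) = 0 := by
    apply measure_mono_null _ (hconv.addHaar_frontier volume)
    exact fun x hx => ⟨subset_closure hx.1, hx.2⟩
  have hΩae : Ω =ᵐ[volume] interior Ω := by
    rw [MeasureTheory.ae_eq_set]
    constructor
    · exact hfr
    · rw [Set.diff_eq_empty.mpr interior_subset]; exact measure_empty
  -- the good open sets
  set U : R2 → Set R2 := fun z => interior Ω ∩ (fun x => x + z) ⁻¹' interior Ω with hUdef
  have hUopen : ∀ z, IsOpen (U z) :=
    fun z => isOpen_interior.inter (isOpen_interior.preimage (continuous_id.add continuous_const))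
  have hUmeas : ∀ z, MeasurableSet (U z) := fun z => (hUopen z).measurableSet
  have hUsubΩ : ∀ z, U z ⊆ Ω := fun z => fun x hx => interior_subset hx.1
  have hUS : ∀ z, U z ⊆ {x ∈ Ω | x + z ∈ Ω} :=
    fun z x hx => ⟨interior_subset hx.1, interior_subset hx.2⟩
  have hUfin : ∀ z, volume (U z) < ⊤ :=
    fun z => lt_of_le_of_lt (measure_mono ((hUsubΩ z).trans subset_closure)) hKfin
  have hSU : ∀ z : R2, {x ∈ Ω | x + z ∈ Ω} =ᵐ[volume] U z := by
    intro z
    rw [MeasureTheory.ae_eq_set]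
    constructor
    · have hnull : volume ((Ω \ interior Ω) ∪ (fun x => x + z) ⁻¹' (Ω \ interior Ω)) = 0 := by
        apply measure_union_null hfr
        rw [measure_preimage_add_right]
        exact hfr
      apply measure_mono_null _ hnull
      rintro x ⟨⟨hx1, hx2⟩, hxU⟩
      by_cases h : x ∈ interior Ω
      · right
        exact ⟨hx2, fun hc => hxU ⟨h, hc⟩⟩
      · exact Or.inl ⟨hx1, h⟩
    · rw [Set.diff_eq_empty.mpr (hUS z)]; exact measure_empty
  -- gradient facts
  have hgrad_eq : ∀ y : R2, ‖gradient f y‖ = ‖fderiv ℝ f y‖ := by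
    intro y
    exact LinearIsometryEquiv.norm_map (InnerProductSpace.toDual ℝ R2).symm (fderiv ℝ f y)
  have hUD : UniqueDiffOn ℝ (closure Ω) :=
    uniqueDiffOn_convex hconv.closure (hne.mono (interior_mono subset_closure))
  have hfdW : ContinuousOn (fderivWithin ℝ f (closure Ω)) (closure Ω) :=
    hf.continuousOn_fderivWithin hUD (by simp)
  obtain ⟨C, hCb⟩ := hK.exists_bound_of_continuousOn hfdW
  have hfd_eq : ∀ y ∈ interior Ω, fderivWithin ℝ f (closure Ω) y = fderiv ℝ f y := by
    intro y hy
    exact fderivWithin_of_mem_nhds (mem_nhds_iff.mpr ⟨interior Ω, hIntCl, isOpen_interior, hy⟩)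
  have hCbound : ∀ y ∈ interior Ω, ‖fderiv ℝ f y‖ ≤ C := by
    intro y hy
    rw [← hfd_eq y hy]
    exact hCb y (hIntCl hy)
  have hfdmeas : Measurable fun y : R2 => ‖fderiv ℝ f y‖ := (measurable_fderiv ℝ f).norm
  have hIint : IntegrableOn (fun y : R2 => ‖fderiv ℝ f y‖) (interior Ω) := by
    apply Measure.integrableOn_of_bounded (M := C)
    · exact ne_top_of_le_ne_top hKfin.ne (measure_mono hIntCl)
    · exact hfdmeas.aestronglyMeasurable
    · filter_upwards [ae_restrict_mem isOpen_interior.measurableSet] with y hy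
      rw [norm_norm]
      exact hCbound y hy
  have hgrad_fun : (fun y : R2 => ‖gradient f y‖) = fun y => ‖fderiv ℝ f y‖ :=
    funext hgrad_eq
  have hI_eq : I = ∫ y in interior Ω, ‖fderiv ℝ f y‖ := by
    rw [hIdef, setIntegral_congr_set hΩae, hgrad_fun]
  have hJ : (∫⁻ y in interior Ω, ENNReal.ofReal ‖fderiv ℝ f y‖) = ENNReal.ofReal I := by
    rw [hI_eq]
    exact (ofReal_integral_eq_lintegral_ofReal hIint
      (Filter.Eventually.of_forall fun y => norm_nonneg _)).symm
  -- differentiability on the interior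
  have hdiff : ∀ y ∈ interior Ω, DifferentiableAt ℝ f y := fun y hy =>
    ((hf.mono hIntCl).differentiableOn (by simp)).differentiableAt (isOpen_interior.mem_nhds hy)
  have hfderivCont : ContinuousOn (fderiv ℝ f) (interior Ω) :=
    (hf.mono hIntCl).continuousOn_fderiv_of_isOpen isOpen_interior (by simp)
  -- segments stay in the interior
  have hsegU : ∀ z : R2, ∀ x ∈ U z, ∀ t ∈ Icc (0:ℝ) 1, x + t • z ∈ interior Ω := by
    intro z x hx t ht
    have h := hconv.interior hx.1 hx.2 (sub_nonneg.2 ht.2) ht.1 (by ring)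
    rw [show (1 - t) • x + t • (x + z) = x + t • z by rw [smul_add, sub_smul, one_smul]; abel] at h
    exact h
  -- continuity of the integrands
  have hfU : ContinuousOn f (interior Ω) := hfc.mono hIntCl
  have hcontΔ : ∀ z : R2, ContinuousOn (fun x => f (x + z) - f x) (U z) := by
    intro z
    exact (hfU.comp (continuous_id.add continuous_const).continuousOn
      (fun x hx => hx.2)).sub (hfU.mono (fun x hx => hx.1))
  have hptb : ∀ z : R2, ∀ x ∈ U z, |f (x + z) - f x| ≤ 2 * M := by
    intro z x hx
    calc |f (x + z) - f x| ≤ |f (x + z)| + |f x| := abs_sub _ _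
      _ ≤ M + M := add_le_add (hMb _ (interior_subset hx.2)) (hMb _ (interior_subset hx.1))
      _ = 2 * M := by ring
  have hInt1 : ∀ z : R2, IntegrableOn (fun x => (f (x + z) - f x) ^ 2) (U z) := by
    intro z
    apply Integrable.mono' (g := fun _ => (2 * M) ^ 2)
    · exact integrableOn_const (hUfin z).ne
    · exact (((hcontΔ z).pow 2).aestronglyMeasurable (hUmeas z))
    · filter_upwards [ae_restrict_mem (hUmeas z)] with x hx
      rw [Real.norm_eq_abs, abs_of_nonneg (sq_nonneg _), ← sq_abs]
      exact pow_le_pow_left₀ (abs_nonneg _) (hptb z x hx) 2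
  have hInt2 : ∀ z : R2, IntegrableOn (fun x => |f (x + z) - f x|) (U z) := by
    intro z
    apply Integrable.mono' (g := fun _ => 2 * M)
    · exact integrableOn_const (hUfin z).ne
    · exact ((hcontΔ z).abs.aestronglyMeasurable (hUmeas z))
    · filter_upwards [ae_restrict_mem (hUmeas z)] with x hx
      rw [Real.norm_eq_abs, abs_abs]
      exact hptb z x hx
  -- pointwise FTC bound
  have hptw : ∀ z : R2, ∀ x ∈ U z,
      |f (x + z) - f x| ≤ ∫ t in (0:ℝ)..1, ‖z‖ * ‖fderiv ℝ f (x + t • z)‖ := by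
    intro z x hx
    have hseg := hsegU z x hx
    have hderiv : ∀ t ∈ Set.uIcc (0:ℝ) 1,
        HasDerivAt (fun s : ℝ => f (x + s • z)) ((fderiv ℝ f (x + t • z)) z) t := by
      intro t ht
      rw [Set.uIcc_of_le zero_le_one] at ht
      have hline : HasDerivAt (fun s : ℝ => x + s • z) z t := by
        simpa using ((hasDerivAt_id t).smul_const z).const_add x
      exact ((hdiff _ (hseg t ht)).hasFDerivAt).comp_hasDerivAt t hline
    have hγcont : Continuous (fun t : ℝ => x + t • z) :=
      continuous_const.add (continuous_id.smul continuous_const)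
    have hDcont : ContinuousOn (fun t : ℝ => (fderiv ℝ f (x + t • z)) z) (Icc 0 1) := by
      apply ContinuousOn.clm_apply _ continuousOn_const
      exact hfderivCont.comp hγcont.continuousOn hseg
    have hii : IntervalIntegrable (fun t : ℝ => (fderiv ℝ f (x + t • z)) z) volume 0 1 := by
      apply ContinuousOn.intervalIntegrable
      rwa [Set.uIcc_of_le zero_le_one]
    have hNcont : ContinuousOn (fun t : ℝ => ‖z‖ * ‖fderiv ℝ f (x + t • z)‖) (Icc 0 1) := by
      apply continuousOn_const.mul
      exact (continuous_norm.comp_continuousOn (hfderivCont.comp hγcont.continuousOn hseg))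
    have hiiN : IntervalIntegrable (fun t : ℝ => ‖z‖ * ‖fderiv ℝ f (x + t • z)‖) volume 0 1 := by
      apply ContinuousOn.intervalIntegrable
      rwa [Set.uIcc_of_le zero_le_one]
    have hFTC := intervalIntegral.integral_eq_sub_of_hasDerivAt hderiv hii
    have heq : f (x + z) - f x = ∫ t in (0:ℝ)..1, (fderiv ℝ f (x + t • z)) z := by
      rw [hFTC]; simp
    rw [heq]
    calc |∫ t in (0:ℝ)..1, (fderiv ℝ f (x + t • z)) z|
        ≤ ∫ t in (0:ℝ)..1, |(fderiv ℝ f (x + t • z)) z| :=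
          intervalIntegral.abs_integral_le_integral_abs zero_le_one
      _ ≤ ∫ t in (0:ℝ)..1, ‖z‖ * ‖fderiv ℝ f (x + t • z)‖ := by
          apply intervalIntegral.integral_mono_on zero_le_one hii.abs hiiN
          intro t ht
          rw [← Real.norm_eq_abs]
          calc ‖(fderiv ℝ f (x + t • z)) z‖ ≤ ‖fderiv ℝ f (x + t • z)‖ * ‖z‖ :=
                ContinuousLinearMap.le_opNorm _ _
            _ = ‖z‖ * ‖fderiv ℝ f (x + t • z)‖ := mul_comm _ _
  -- the key integral bound via Tonelli
  have step2 : ∀ z : R2, (∫ x in U z, |f (x + z) - f x|) ≤ ‖z‖ * I := by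
    intro z
    have hrw : (∫ x in U z, |f (x + z) - f x|)
        = (∫⁻ x in U z, ENNReal.ofReal |f (x + z) - f x|).toReal :=
      integral_eq_lintegral_of_nonneg_ae (Filter.Eventually.of_forall fun x => abs_nonneg _)
        ((hcontΔ z).abs.aestronglyMeasurable (hUmeas z))
    rw [hrw]
    have hkey : (∫⁻ x in U z, ENNReal.ofReal |f (x + z) - f x|)
        ≤ ENNReal.ofReal ‖z‖ * ENNReal.ofReal I := by
      have hub : ∀ x ∈ U z, ENNReal.ofReal |f (x + z) - f x|
          ≤ ENNReal.ofReal ‖z‖ *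
            ∫⁻ t in Ioc (0:ℝ) 1, ENNReal.ofReal ‖fderiv ℝ f (x + t • z)‖ := by
        intro x hx
        have h1 := hptw z x hx
        have hseg := hsegU z x hx
        have hγcont : Continuous (fun t : ℝ => x + t • z) :=
          continuous_const.add (continuous_id.smul continuous_const)
        have hNcont : ContinuousOn (fun t : ℝ => ‖z‖ * ‖fderiv ℝ f (x + t • z)‖) (Icc 0 1) := by
          apply continuousOn_const.mul
          exact (continuous_norm.comp_continuousOn (hfderivCont.comp hγcont.continuousOn hseg))
        have hint : IntegrableOn (fun t : ℝ => ‖z‖ * ‖fderiv ℝ f (x + t • z)‖) (Ioc 0 1) :=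
          (hNcont.integrableOn_Icc).mono_set Set.Ioc_subset_Icc_self
        calc ENNReal.ofReal |f (x + z) - f x|
            ≤ ENNReal.ofReal (∫ t in (0:ℝ)..1, ‖z‖ * ‖fderiv ℝ f (x + t • z)‖) :=
              ENNReal.ofReal_le_ofReal h1
          _ = ∫⁻ t in Ioc (0:ℝ) 1, ENNReal.ofReal (‖z‖ * ‖fderiv ℝ f (x + t • z)‖) := by
              rw [intervalIntegral.integral_of_le zero_le_one]
              exact ofReal_integral_eq_lintegral_ofReal hint
                (Filter.Eventually.of_forall fun t => by positivity)
          _ = ENNReal.ofReal ‖z‖ *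
              ∫⁻ t in Ioc (0:ℝ) 1, ENNReal.ofReal ‖fderiv ℝ f (x + t • z)‖ := by
              simp_rw [ENNReal.ofReal_mul (norm_nonneg z)]
              rw [lintegral_const_mul' _ _ ENNReal.ofReal_ne_top]
      calc (∫⁻ x in U z, ENNReal.ofReal |f (x + z) - f x|)
          ≤ ∫⁻ x in U z, ENNReal.ofReal ‖z‖ *
              ∫⁻ t in Ioc (0:ℝ) 1, ENNReal.ofReal ‖fderiv ℝ f (x + t • z)‖ := by
            apply lintegral_mono_ae
            filter_upwards [ae_restrict_mem (hUmeas z)] with x hx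
            exact hub x hx
        _ = ENNReal.ofReal ‖z‖ * ∫⁻ x in U z,
              ∫⁻ t in Ioc (0:ℝ) 1, ENNReal.ofReal ‖fderiv ℝ f (x + t • z)‖ :=
            lintegral_const_mul' _ _ ENNReal.ofReal_ne_top
        _ ≤ ENNReal.ofReal ‖z‖ * ENNReal.ofReal I := by
            apply mul_le_mul_right
            have hmeas2 : Measurable fun p : R2 × ℝ =>
                ENNReal.ofReal ‖fderiv ℝ f (p.1 + p.2 • z)‖ := by
              apply Measurable.comp (hfdmeas.ennreal_ofReal)
              exact (continuous_fst.add (continuous_snd.smul continuous_const)).measurable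
            rw [lintegral_lintegral_swap hmeas2.aemeasurable]
            have hinner : ∀ t ∈ Ioc (0:ℝ) 1,
                (∫⁻ x in U z, ENNReal.ofReal ‖fderiv ℝ f (x + t • z)‖) ≤ ENNReal.ofReal I := by
              intro t ht
              set W : Set R2 := (fun y : R2 => y + -(t • z)) ⁻¹' U z with hWdef
              have hWmeas : MeasurableSet W := (hUmeas z).preimage (measurable_add_const _)
              have hpre : (fun x : R2 => x + t • z) ⁻¹' W = U z := by
                ext x; simp [hWdef]
              have hmp : MeasurePreserving (fun x : R2 => x + t • z) volume volume :=
                measurePreserving_add_right volume (t • z)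
              have htr := hmp.setLIntegral_comp_preimage hWmeas
                (f := fun y => ENNReal.ofReal ‖fderiv ℝ f y‖) (hfdmeas.ennreal_ofReal)
              rw [hpre] at htr
              rw [htr]
              have hWsub : W ⊆ interior Ω := by
                intro y hy
                have h2 := hsegU z _ hy t ⟨ht.1.le, ht.2⟩
                simpa using h2
              calc (∫⁻ y in W, ENNReal.ofReal ‖fderiv ℝ f y‖)
                  ≤ ∫⁻ y in interior Ω, ENNReal.ofReal ‖fderiv ℝ f y‖ :=
                    lintegral_mono_set hWsub
                _ = ENNReal.ofReal I := hJ
            calc (∫⁻ t in Ioc (0:ℝ) 1, ∫⁻ x in U z, ENNReal.ofReal ‖fderiv ℝ f (x + t • z)‖)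
                ≤ ∫⁻ _ in Ioc (0:ℝ) 1, ENNReal.ofReal I := by
                  apply lintegral_mono_ae
                  filter_upwards [ae_restrict_mem measurableSet_Ioc] with t ht
                  exact hinner t ht
              _ = ENNReal.ofReal I := by
                  rw [setLIntegral_const, Real.volume_Ioc]
                  norm_num
    calc (∫⁻ x in U z, ENNReal.ofReal |f (x + z) - f x|).toReal
        ≤ (ENNReal.ofReal ‖z‖ * ENNReal.ofReal I).toReal :=
          ENNReal.toReal_mono (by simp [ENNReal.mul_ne_top]) hkey
      _ = ‖z‖ * I := by
          rw [ENNReal.toReal_mul, ENNReal.toReal_ofReal (norm_nonneg z),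
            ENNReal.toReal_ofReal hI0]
  -- the two per-z bounds on  gU z := ∫ x in U z, (f (x+z) - f x)^2
  have hgB : ∀ z : R2, (∫ x in U z, (f (x + z) - f x) ^ 2) ≤ 4 * M ^ 2 * V := by
    intro z
    have h1 : ‖∫ x in U z, (f (x + z) - f x) ^ 2‖ ≤ (2 * M) ^ 2 * (volume (U z)).toReal := by
      apply norm_setIntegral_le_of_norm_le_const (hUfin z)
      intro x hx
      rw [Real.norm_eq_abs, abs_of_nonneg (sq_nonneg _), ← sq_abs]
      exact pow_le_pow_left₀ (abs_nonneg _) (hptb z x hx) 2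
    have h2 : (volume (U z)).toReal ≤ V :=
      ENNReal.toReal_mono hVfin (measure_mono (hUsubΩ z))
    calc (∫ x in U z, (f (x + z) - f x) ^ 2) ≤ ‖∫ x in U z, (f (x + z) - f x) ^ 2‖ :=
          le_abs_self _
      _ ≤ (2 * M) ^ 2 * (volume (U z)).toReal := h1
      _ ≤ (2 * M) ^ 2 * V := by
          apply mul_le_mul_of_nonneg_left h2 (by positivity)
      _ = 4 * M ^ 2 * V := by ring
  have hgA : ∀ z : R2, (∫ x in U z, (f (x + z) - f x) ^ 2) ≤ 2 * M * (‖z‖ * I) := by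
    intro z
    calc (∫ x in U z, (f (x + z) - f x) ^ 2)
        ≤ ∫ x in U z, 2 * M * |f (x + z) - f x| := by
          apply setIntegral_mono_on (hInt1 z) ((hInt2 z).const_mul (2 * M)) (hUmeas z)
          intro x hx
          calc (f (x + z) - f x) ^ 2 = |f (x + z) - f x| * |f (x + z) - f x| := by
                rw [abs_mul_abs_self]; ring
            _ ≤ (2 * M) * |f (x + z) - f x| :=
              mul_le_mul_of_nonneg_right (hptb z x hx) (abs_nonneg _)
      _ = 2 * M * ∫ x in U z, |f (x + z) - f x| := integral_const_mul _ _
      _ ≤ 2 * M * (‖z‖ * I) := mul_le_mul_of_nonneg_left (step2 z) (by positivity)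
  -- rewrite the inner integral via U z
  have hφU : ∀ z : R2, (∫ x in {x ∈ Ω | x + z ∈ Ω}, (f (x + z) - f x) ^ 2 / ‖z‖ ^ 3)
      = (∫ x in U z, (f (x + z) - f x) ^ 2) / ‖z‖ ^ 3 := by
    intro z
    rw [setIntegral_congr_set (hSU z), integral_div]
  -- the master bound
  have main : ∀ (c : ℝ) (k : ℕ), 0 ≤ c →
      (∀ z : R2, R ≤ ‖z‖ → ‖z‖ ≤ δ →
        (∫ x in U z, (f (x + z) - f x) ^ 2) / ‖z‖ ^ 3 ≤ c / ‖z‖ ^ k) →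
      (∫ z in (Metric.ball (0:R2) R)ᶜ,
          ∫ x in {x ∈ Ω | x + z ∈ Ω}, (f (x + z) - f x) ^ 2 / ‖z‖ ^ 3)
        ≤ 2 * π * ∫ y in R..δ, y * (c / y ^ k) := by
    intro c k hc hbound
    obtain ⟨hint, heq⟩ := annulus_setup c R δ k hc hR hRδ
    have h1 : (∫ z in (Metric.ball (0:R2) R)ᶜ,
          ∫ x in {x ∈ Ω | x + z ∈ Ω}, (f (x + z) - f x) ^ 2 / ‖z‖ ^ 3)
        ≤ ∫ z in (Metric.ball (0:R2) R)ᶜ,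
          Set.indicator {y : R2 | ‖y‖ ∈ Icc R δ} (fun z => c / ‖z‖ ^ k) z := by
      apply integral_mono_of_nonneg (Filter.Eventually.of_forall hφ0) hint.integrableOn
      filter_upwards [ae_restrict_mem measurableSet_ball.compl] with z hz
      have hzR : R ≤ ‖z‖ := by
        simpa [Metric.mem_ball, dist_zero_right] using hz
      rcases le_or_gt ‖z‖ δ with hzδ | hzδ
      · rw [hφU z, Set.indicator_of_mem (show z ∈ {y : R2 | ‖y‖ ∈ Icc R δ} from ⟨hzR, hzδ⟩)]
        exact hbound z hzR hzδ
      · rw [hS_empty z hzδ]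
        simp only [Measure.restrict_empty, integral_zero_measure]
        exact Set.indicator_nonneg (fun y _ => by positivity) z
    have h2 : (∫ z in (Metric.ball (0:R2) R)ᶜ,
          Set.indicator {y : R2 | ‖y‖ ∈ Icc R δ} (fun z => c / ‖z‖ ^ k) z)
        ≤ ∫ z : R2, Set.indicator {y : R2 | ‖y‖ ∈ Icc R δ} (fun z => c / ‖z‖ ^ k) z :=
      setIntegral_le_integral hint
        (Filter.Eventually.of_forall fun z => Set.indicator_nonneg (fun y _ => by positivity) z)
    exact h1.trans (h2.trans_eq heq)
  -- route A
  have routeA : (∫ z in (Metric.ball (0:R2) R)ᶜ,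
        ∫ x in {x ∈ Ω | x + z ∈ Ω}, (f (x + z) - f x) ^ 2 / ‖z‖ ^ 3)
      ≤ 4 * π / R * M * (δ * I) := by
    have hb : ∀ z : R2, R ≤ ‖z‖ → ‖z‖ ≤ δ →
        (∫ x in U z, (f (x + z) - f x) ^ 2) / ‖z‖ ^ 3 ≤ (2 * M * I) / ‖z‖ ^ 2 := by
      intro z hzR hzδ
      have hz0 : (0:ℝ) < ‖z‖ := hR.trans_le hzR
      have e : 2 * M * (‖z‖ * I) / ‖z‖ ^ 3 = 2 * M * I / ‖z‖ ^ 2 := by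
        field_simp
      calc (∫ x in U z, (f (x + z) - f x) ^ 2) / ‖z‖ ^ 3
          ≤ 2 * M * (‖z‖ * I) / ‖z‖ ^ 3 := div_le_div_of_nonneg_right (hgA z) (by positivity)
        _ = 2 * M * I / ‖z‖ ^ 2 := e
    have h3 := main (2 * M * I) 2 (by positivity) hb
    rw [annulus_int_two (2 * M * I) R δ hR hRδ] at h3
    have hlog : Real.log (δ / R) ≤ δ / R := by
      have := Real.log_le_sub_one_of_pos (div_pos (hR.trans_le hRδ) hR)
      linarith
    calc (∫ z in (Metric.ball (0:R2) R)ᶜ,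
          ∫ x in {x ∈ Ω | x + z ∈ Ω}, (f (x + z) - f x) ^ 2 / ‖z‖ ^ 3)
        ≤ 2 * π * (2 * M * I * Real.log (δ / R)) := h3
      _ ≤ 2 * π * (2 * M * I * (δ / R)) := by
          apply mul_le_mul_of_nonneg_left _ (by positivity)
          exact mul_le_mul_of_nonneg_left hlog (by positivity)
      _ = 4 * π / R * M * (δ * I) := by
          field_simp
          ring
  -- route B
  have routeB : (∫ z in (Metric.ball (0:R2) R)ᶜ,
        ∫ x in {x ∈ Ω | x + z ∈ Ω}, (f (x + z) - f x) ^ 2 / ‖z‖ ^ 3)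
      ≤ 4 * π / R * M * (2 * V * M) := by
    have hb : ∀ z : R2, R ≤ ‖z‖ → ‖z‖ ≤ δ →
        (∫ x in U z, (f (x + z) - f x) ^ 2) / ‖z‖ ^ 3 ≤ (4 * M ^ 2 * V) / ‖z‖ ^ 3 :=
      fun z hzR hzδ => div_le_div_of_nonneg_right (hgB z) (by positivity)
    have h3 := main (4 * M ^ 2 * V) 3 (by positivity) hb
    rw [annulus_int_three (4 * M ^ 2 * V) R δ hR hRδ] at h3
    calc (∫ z in (Metric.ball (0:R2) R)ᶜ,
          ∫ x in {x ∈ Ω | x + z ∈ Ω}, (f (x + z) - f x) ^ 2 / ‖z‖ ^ 3)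
        ≤ 2 * π * (4 * M ^ 2 * V * (R⁻¹ - δ⁻¹)) := h3
      _ ≤ 2 * π * (4 * M ^ 2 * V * R⁻¹) := by
          apply mul_le_mul_of_nonneg_left _ (by positivity)
          apply mul_le_mul_of_nonneg_left _ (by positivity)
          have : (0:ℝ) ≤ δ⁻¹ := inv_nonneg.2 hδ0
          linarith
      _ = 4 * π / R * M * (2 * V * M) := by
          field_simp
  rw [mul_min_of_nonneg _ _ (show (0:ℝ) ≤ 4 * π / R * M by positivity)]
  exact le_min routeA routeB
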